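/- Let Λ be a finite dimensional algebra, E a generator of Λ-mod, Γ = (End_Λ E)^op, and M an E-Gorenstein projective E-rigid Λ-module with minimal add E-presentation E₁ → E₀ → M → 0. Then applying Hom_Λ(E, −) yields a minimal projective presentation Hom(E,E₁) → Hom(E,E₀) → Hom(E,M) → 0 of the Γ-module Hom_Λ(E, M), and Hom_Λ(E, M) is a τ-rigid Γ-module. -/
import Mathlib

set_option linter.unusedSectionVars false
set_option linter.unusedVariables false
set_option maxHeartbeats 1000000

open Function LinearMap MulOpposite

noncomputable section

/-- A submodule `N ≤ P` is superfluous (small) if any complement generating together with it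
the whole module must itself be the whole module. -/
def IsSuperfluous (R : Type) [Ring R] {P : Type} [AddCommGroup P] [Module R P]
    (N : Submodule R P) : Prop :=
  ∀ N' : Submodule R P, N ⊔ N' = ⊤ → N' = ⊤

/-- `P₁ →f P₀ →g M → 0` is a minimal projective presentation. -/
structure IsMinimalProjPresentation {R : Type} [Ring R] {P₁ P₀ M : Type}
    [AddCommGroup P₁] [AddCommGroup P₀] [AddCommGroup M]
    [Module R P₁] [Module R P₀] [Module R M]
    (f : P₁ →ₗ[R] P₀) (g : P₀ →ₗ[R] M) : Prop where
  projective₁ : Module.Projective R P₁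
  projective₀ : Module.Projective R P₀
  finite₁ : Module.Finite R P₁
  finite₀ : Module.Finite R P₀
  surjective : Surjective g
  exact : LinearMap.range f = LinearMap.ker g
  superfluous₀ : IsSuperfluous R (LinearMap.ker g)
  superfluous₁ : IsSuperfluous R (LinearMap.ker f)

/-- A finitely generated module is Gorenstein projective if it is (isomorphic to) a syzygy of a
complete exact sequence of finitely generated projective modules which stays exact under
`Hom(-, R)`. -/
def IsGorensteinProjective (R : Type) [Ring R] (M : Type) [AddCommGroup M] [Module R M] : Prop :=
  ∃ (P : ℤ → ModuleCat.{0} R) (d : ∀ i, P i →ₗ[R] P (i + 1)),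
    (∀ i, Module.Projective R (P i)) ∧ (∀ i, Module.Finite R (P i)) ∧
    (∀ i, LinearMap.range (d i) = LinearMap.ker (d (i + 1))) ∧
    (∀ i (φ : P (i + 1) →ₗ[R] R), φ.comp (d i) = 0 →
      ∃ ψ : P (i + 1 + 1) →ₗ[R] R, φ = ψ.comp (d (i + 1))) ∧
    Nonempty (M ≃ₗ[R] LinearMap.range (d 0))

/-- A projective resolution `⋯ → P₁ → P₀ → M → 0` by finitely generated projectives. -/
structure ProjResolution (R : Type) [Ring R] (M : Type) [AddCommGroup M] [Module R M] where
  P : ℕ → ModuleCat.{0} R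
  d : ∀ i, P (i + 1) →ₗ[R] P i
  aug : P 0 →ₗ[R] M
  projective : ∀ i, Module.Projective R (P i)
  finite : ∀ i, Module.Finite R (P i)
  surjective : Surjective aug
  exact₀ : LinearMap.range (d 0) = LinearMap.ker aug
  exact : ∀ i, LinearMap.range (d (i + 1)) = LinearMap.ker (d i)

/-- Projective dimension at most `n`. -/
def ProjDimLE (R : Type) [Ring R] (M : Type) [AddCommGroup M] [Module R M] (n : ℕ) : Prop :=
  ∃ res : ProjResolution R M, ∀ i, n < i → Subsingleton (res.P i)

/-- `M` is semi-Gorenstein projective: `Ext^i(M, R) = 0` for all `i ≥ 1`, expressed as exactness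
of the dual of any projective resolution in all positive degrees. -/
def IsSemiGorensteinProjective (R : Type) [Ring R] (M : Type) [AddCommGroup M] [Module R M] :
    Prop :=
  ∀ res : ProjResolution R M, ∀ i (φ : res.P (i + 1) →ₗ[R] R),
    φ.comp (res.d (i + 1)) = 0 → ∃ ψ : res.P i →ₗ[R] R, φ = ψ.comp (res.d i)

/-- An injective coresolution `0 → N → I⁰ → I¹ → ⋯`. -/
structure InjCoresolution (R : Type) [Ring R] (N : Type) [AddCommGroup N] [Module R N] where
  I : ℕ → ModuleCat.{0} R
  aug : N →ₗ[R] I 0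
  d : ∀ i, I i →ₗ[R] I (i + 1)
  injective : ∀ i, Module.Injective R (I i)
  mono : Injective aug
  exact₀ : LinearMap.range aug = LinearMap.ker (d 0)
  exact : ∀ i, LinearMap.range (d i) = LinearMap.ker (d (i + 1))

/-- Injective dimension at most `n`. -/
def InjDimLE (R : Type) [Ring R] (N : Type) [AddCommGroup N] [Module R N] (n : ℕ) : Prop :=
  ∃ c : InjCoresolution R N, ∀ i, n < i → Subsingleton (c.I i)

/-- A Gorenstein ring: finite self-injective dimension on both sides. -/
def IsGorensteinRing (R : Type) [Ring R] : Prop :=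
  ∃ n, InjDimLE R R n ∧ InjDimLE Rᵐᵒᵖ Rᵐᵒᵖ n

/-- Indecomposability: nontrivial, and no nontrivial idempotent endomorphism. -/
def IsIndecomposable (R : Type) [Ring R] (M : Type) [AddCommGroup M] [Module R M] : Prop :=
  Nontrivial M ∧ ∀ e : M →ₗ[R] M, e.comp e = e → e = 0 ∨ e = LinearMap.id

/-- `Z` is a direct summand of `M`. -/
def IsDirectSummand (R : Type) [Ring R] (Z M : Type) [AddCommGroup Z] [AddCommGroup M]
    [Module R Z] [Module R M] : Prop :=
  ∃ (i : Z →ₗ[R] M) (p : M →ₗ[R] Z), p.comp i = LinearMap.id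

/-- `X` lies in `add E`: it is a direct summand of a finite direct sum of copies of `E`. -/
def IsInAdd (R : Type) [Ring R] (E X : Type) [AddCommGroup E] [AddCommGroup X]
    [Module R E] [Module R X] : Prop :=
  ∃ n : ℕ, IsDirectSummand R X (Fin n → E)

end
open Function LinearMap MulOpposite
noncomputable section

section Transpose
variable {R : Type} [Ring R]
variable {P₁ P₀ : Type} [AddCommGroup P₁] [AddCommGroup P₀] [Module R P₁] [Module R P₀]

/-- The map `Hom_R(P₀, R) → Hom_R(P₁, R)` given by precomposition with `f`. -/
def transposeHomMap (f : P₁ →ₗ[R] P₀) : (P₀ →ₗ[R] R) →ₗ[Rᵐᵒᵖ] (P₁ →ₗ[R] R) where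
  toFun g := g.comp f
  map_add' g h := by ext x; simp
  map_smul' a g := rfl

/-- The (Auslander–Bridger) transpose of `M` with respect to a projective presentation
`P₁ →f P₀ → M → 0`: the cokernel of `Hom(f, R)`, a right `R`-module. -/
abbrev TransposeOf (f : P₁ →ₗ[R] P₀) : Type :=
  (P₁ →ₗ[R] R) ⧸ LinearMap.range (transposeHomMap f)

end Transpose

section Dual
/-- The `K`-linear dual of a right `R`-module, regarded as a left `R`-module. -/
abbrev RightDual (K R N : Type) [Field K] [Ring R] [Algebra K R]
    [AddCommGroup N] [Module K N] [Module Rᵐᵒᵖ N] [SMulCommClass Rᵐᵒᵖ K N] : Type := N →ₗ[K] K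

variable (K R N : Type) [Field K] [Ring R] [Algebra K R]
  [AddCommGroup N] [Module K N] [Module Rᵐᵒᵖ N] [SMulCommClass Rᵐᵒᵖ K N]

variable {R N} in
/-- Right scalar multiplication by `a : R` on `N`, as a `K`-linear map. -/
def opSmulHom (a : R) : N →ₗ[K] N where
  toFun x := op a • x
  map_add' x y := smul_add _ x y
  map_smul' c x := smul_comm (op a) c x

instance : SMul R (RightDual K R N) :=
  ⟨fun a φ => (φ : N →ₗ[K] K).comp (opSmulHom (K := K) a)⟩

instance : Module R (RightDual K R N) :=
  Module.ofMinimalAxioms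
    (fun a φ ψ => by apply LinearMap.ext; intro x; rfl)
    (fun a b φ => by
      apply LinearMap.ext; intro x
      show φ (op (a + b) • x) = φ (op a • x) + φ (op b • x)
      rw [op_add, add_smul, map_add])
    (fun a b φ => by
      apply LinearMap.ext; intro x
      show φ (op (a * b) • x) = φ (op b • op a • x)
      rw [op_mul, mul_smul])
    (fun φ => by
      apply LinearMap.ext; intro x
      show φ (op (1 : R) • x) = φ x
      rw [op_one, one_smul])

end Dual

section Tau
variable (K : Type) [Field K] (R : Type) [Ring R] [Algebra K R]

/-- The Auslander–Reiten translate `τM = D Tr M` of `M` with respect to the projective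
presentation `P₁ →f P₀ → M → 0`. -/
abbrev TauOf {P₁ P₀ : Type} [AddCommGroup P₁] [AddCommGroup P₀] [Module R P₁] [Module R P₀]
    (f : P₁ →ₗ[R] P₀) : Type :=
  RightDual K R (TransposeOf f)

/-- `M` is τ-rigid: `Hom_R(M, τM) = 0` for the AR translate computed from any (equivalently, some)
minimal projective presentation of `M`. -/
def IsTauRigid (M : Type) [AddCommGroup M] [Module R M] : Prop :=
  ∀ (P₁ P₀ : ModuleCat.{0} R) (f : P₁ →ₗ[R] P₀) (g : P₀ →ₗ[R] M),
    IsMinimalProjPresentation f g → ∀ h : M →ₗ[R] TauOf K R f, h = 0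

end Tau
open Function LinearMap MulOpposite
noncomputable section

section ESection
variable (R : Type) [Ring R] (E : Type) [AddCommGroup E] [Module R E]

/-- `E` is a generator of `R`-mod: `R ∈ add E`. -/
def IsGenerator : Prop := IsInAdd R E R

/-- `E₁ →f₁ E₀ →f₀ M → 0` is a minimal `add E`-presentation: each `fᵢ` is a minimal right
`add E`-approximation of its image. -/
structure IsMinimalAddEPresentation {E₁ E₀ M : Type}
    [AddCommGroup E₁] [AddCommGroup E₀] [AddCommGroup M]
    [Module R E₁] [Module R E₀] [Module R M]
    (f₁ : E₁ →ₗ[R] E₀) (f₀ : E₀ →ₗ[R] M) : Prop where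
  mem₁ : IsInAdd R E E₁
  mem₀ : IsInAdd R E E₀
  surjective : Surjective f₀
  exact : LinearMap.range f₁ = LinearMap.ker f₀
  approx₀ : ∀ (X : ModuleCat.{0} R), IsInAdd R E X →
    ∀ g : X →ₗ[R] M, ∃ h : X →ₗ[R] E₀, f₀.comp h = g
  approx₁ : ∀ (X : ModuleCat.{0} R), IsInAdd R E X →
    ∀ g : X →ₗ[R] E₀, LinearMap.range g ≤ LinearMap.range f₁ →
      ∃ h : X →ₗ[R] E₁, f₁.comp h = g
  minimal₀ : ∀ h : E₀ →ₗ[R] E₀, f₀.comp h = f₀ → Bijective h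
  minimal₁ : ∀ h : E₁ →ₗ[R] E₁, f₁.comp h = f₁ → Bijective h

/-- `M` is `E`-rigid: for a minimal `add E`-presentation `E₁ →f₁ E₀ → M → 0`, the map
`Hom(f₁, M)` is surjective. -/
def IsERigid (M : Type) [AddCommGroup M] [Module R M] : Prop :=
  ∀ (E₁ E₀ : ModuleCat.{0} R) (f₁ : E₁ →ₗ[R] E₀) (f₀ : E₀ →ₗ[R] M),
    IsMinimalAddEPresentation R E f₁ f₀ →
      ∀ g : E₁ →ₗ[R] M, ∃ h : E₀ →ₗ[R] M, h.comp f₁ = g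

/-- `M` is `E`-Gorenstein projective: a syzygy of a complete exact sequence with terms in
`add E` which stays exact under both `Hom(-, E)` and `Hom(E, -)`. -/
def IsEGorensteinProjective (M : Type) [AddCommGroup M] [Module R M] : Prop :=
  ∃ (P : ℤ → ModuleCat.{0} R) (d : ∀ i, P i →ₗ[R] P (i + 1)),
    (∀ i, IsInAdd R E (P i)) ∧
    (∀ i, LinearMap.range (d i) = LinearMap.ker (d (i + 1))) ∧
    (∀ i (φ : P (i + 1) →ₗ[R] E), φ.comp (d i) = 0 →
      ∃ ψ : P (i + 1 + 1) →ₗ[R] E, φ = ψ.comp (d (i + 1))) ∧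
    (∀ i (φ : E →ₗ[R] P (i + 1)), (d (i + 1)).comp φ = 0 →
      ∃ ψ : E →ₗ[R] P i, φ = (d i).comp ψ) ∧
    Nonempty (M ≃ₗ[R] LinearMap.range (d 0))

/-- The opposite endomorphism ring `Γ = (End_R E)ᵒᵖ`. -/
abbrev EndOpRing : Type := (Module.End R E)ᵐᵒᵖ

/-- `Hom_R(E, M)` as a left module over `Γ = (End_R E)ᵒᵖ`. -/
abbrev HomE (M : Type) [AddCommGroup M] [Module R M] : Type := E →ₗ[R] M

instance (M : Type) [AddCommGroup M] [Module R M] : SMul (EndOpRing R E) (HomE R E M) :=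
  ⟨fun a φ => (φ : E →ₗ[R] M).comp (unop a)⟩

instance (M : Type) [AddCommGroup M] [Module R M] : Module (EndOpRing R E) (HomE R E M) :=
  Module.ofMinimalAxioms
    (fun a φ ψ => by apply LinearMap.ext; intro x; rfl)
    (fun a b φ => by
      apply LinearMap.ext; intro x
      show φ ((unop (a + b)) x) = φ ((unop a) x) + φ ((unop b) x)
      rw [unop_add]; exact map_add φ _ _)
    (fun a b φ => by
      apply LinearMap.ext; intro x
      show φ ((unop (a * b)) x) = φ ((unop b) ((unop a) x))
      rw [unop_mul]; rfl)
    (fun φ => by apply LinearMap.ext; intro x; rfl)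

/-- The map `Hom_R(E, M) → Hom_R(E, N)` induced by `u : M → N`, as a `Γ`-linear map. -/
def homEMap {M N : Type} [AddCommGroup M] [AddCommGroup N] [Module R M] [Module R N]
    (u : M →ₗ[R] N) : HomE R E M →ₗ[EndOpRing R E] HomE R E N where
  toFun φ := u.comp (φ : E →ₗ[R] M)
  map_add' φ ψ := by apply LinearMap.ext; intro x; simp
  map_smul' a φ := rfl

/-- `Λ` is CM-`E`-free: every finitely generated indecomposable `E`-Gorenstein projective
`E`-rigid module lies in `add E`. -/
def IsCMEFree : Prop :=
  ∀ (M : ModuleCat.{0} R), Module.Finite R M → IsIndecomposable R M →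
    IsEGorensteinProjective R E M → IsERigid R E M → IsInAdd R E M

end ESection

section AuxGeneral
variable {R : Type} [Ring R]

lemma surj_of_superfluous {P Q : Type} [AddCommGroup P] [AddCommGroup Q]
    [Module R P] [Module R Q]
    (u : P →ₗ[R] Q) (hsup : IsSuperfluous R (LinearMap.ker u))
    (h : P →ₗ[R] P) (hc : u.comp h = u) : Surjective h := by
  have hsup' : LinearMap.ker u ⊔ LinearMap.range h = ⊤ := by
    rw [eq_top_iff]
    intro x _
    have hx : x - h x ∈ LinearMap.ker u := by
      rw [LinearMap.mem_ker, map_sub]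
      have : u (h x) = u x := LinearMap.congr_fun hc x
      rw [this, sub_self]
    exact Submodule.mem_sup.2 ⟨x - h x, hx, h x, LinearMap.mem_range_self _ x, by abel⟩
  exact LinearMap.range_eq_top.1 (hsup _ hsup')

lemma bijective_of_comp_eq {P Q : Type} [AddCommGroup P] [AddCommGroup Q]
    [Module R P] [Module R Q] [Module.Projective R P]
    (u : P →ₗ[R] Q) (hsup : IsSuperfluous R (LinearMap.ker u))
    (h : P →ₗ[R] P) (hc : u.comp h = u) : Bijective h := by
  have hs : Surjective h := surj_of_superfluous u hsup h hc
  obtain ⟨s, hsid⟩ := Module.projective_lifting_property h LinearMap.id hs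
  have hus : u.comp s = u := by
    calc u.comp s = (u.comp h).comp s := by rw [hc]
    _ = u.comp (h.comp s) := by rw [LinearMap.comp_assoc]
    _ = u := by rw [hsid, LinearMap.comp_id]
  have hss : Surjective s := surj_of_superfluous u hsup s hus
  refine ⟨fun x y hxy => ?_, hs⟩
  obtain ⟨a, rfl⟩ := hss x
  obtain ⟨b, rfl⟩ := hss y
  have ha := LinearMap.congr_fun hsid a
  have hb := LinearMap.congr_fun hsid b
  simp only [LinearMap.comp_apply, LinearMap.id_apply] at ha hb
  have : a = b := by rw [← ha, ← hb, hxy]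
  rw [this]

lemma sum_comp' {ι A B C : Type} [AddCommGroup A] [AddCommGroup B] [AddCommGroup C]
    [Module R A] [Module R B] [Module R C] (s : Finset ι) (f : ι → (B →ₗ[R] C))
    (g : A →ₗ[R] B) : (∑ j ∈ s, f j).comp g = ∑ j ∈ s, (f j).comp g := by
  apply LinearMap.ext; intro x
  rw [LinearMap.comp_apply, LinearMap.sum_apply, LinearMap.sum_apply]
  exact Finset.sum_congr rfl fun j _ => rfl

lemma exists_lift_of_range_le {A B C : Type} [AddCommGroup A] [AddCommGroup B] [AddCommGroup C]
    [Module R A] [Module R B] [Module R C] [Module.Projective R A]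
    (t : C →ₗ[R] B) (u : A →ₗ[R] B) (hle : LinearMap.range u ≤ LinearMap.range t) :
    ∃ w : A →ₗ[R] C, t.comp w = u := by
  obtain ⟨w, hw⟩ := Module.projective_lifting_property t.rangeRestrict
    (u.codRestrict (LinearMap.range t) fun x => hle (LinearMap.mem_range_self u x))
    t.surjective_rangeRestrict
  exact ⟨w, LinearMap.ext fun x => congrArg Subtype.val (LinearMap.congr_fun hw x)⟩

lemma exists_dual_basis (P : Type) [AddCommGroup P] [Module R P]
    [Module.Projective R P] [Module.Finite R P] :
    ∃ (n : ℕ) (ξ : Fin n → (P →ₗ[R] R)) (pt : Fin n → P),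
      ∀ x : P, ∑ i, ξ i x • pt i = x := by
  obtain ⟨n, π, hπ⟩ := Module.Finite.exists_fin' R P
  obtain ⟨σ, hσ⟩ := Module.projective_lifting_property π LinearMap.id hπ
  refine ⟨n, fun i => (LinearMap.proj i).comp σ, fun i => π (Pi.single i 1), fun x => ?_⟩
  have h1 : ∀ (i : Fin n) (a : R), a • π (Pi.single i 1) = π (Pi.single i a) := by
    intro i a
    rw [← map_smul]
    congr 1
    rw [← Pi.single_smul, smul_eq_mul, mul_one]
  calc ∑ i, ((LinearMap.proj i).comp σ) x • π (Pi.single i 1)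
      = ∑ i, π (Pi.single i (σ x i)) := Finset.sum_congr rfl fun i _ => h1 i _
    _ = π (∑ i, Pi.single i (σ x i)) := (map_sum π _ _).symm
    _ = π (σ x) := by rw [Finset.univ_sum_single]
    _ = x := LinearMap.congr_fun hσ x

lemma hom_surj_transfer {P₁ P₀ Q₁ Q₀ N : Type}
    [AddCommGroup P₁] [AddCommGroup P₀] [AddCommGroup Q₁] [AddCommGroup Q₀] [AddCommGroup N]
    [Module R P₁] [Module R P₀] [Module R Q₁] [Module R Q₀] [Module R N]
    (f : P₁ →ₗ[R] P₀) (g : P₀ →ₗ[R] N) (hfg : IsMinimalProjPresentation f g)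
    (F₁ : Q₁ →ₗ[R] Q₀) (F₀ : Q₀ →ₗ[R] N) (hFG : IsMinimalProjPresentation F₁ F₀)
    (hs : ∀ γ : Q₁ →ₗ[R] N, ∃ δ : Q₀ →ₗ[R] N, δ.comp F₁ = γ)
    (γ : P₁ →ₗ[R] N) : ∃ β : P₀ →ₗ[R] N, β.comp f = γ := by
  haveI := hfg.projective₁; haveI := hfg.projective₀
  haveI := hFG.projective₁; haveI := hFG.projective₀
  obtain ⟨u₀, hu₀⟩ := Module.projective_lifting_property F₀ g hFG.surjective
  obtain ⟨v₀, hv₀⟩ := Module.projective_lifting_property g F₀ hfg.surjective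
  have hw₀ : g.comp (v₀.comp u₀) = g := by
    rw [← LinearMap.comp_assoc, hv₀, hu₀]
  have bij₀ := bijective_of_comp_eq g hfg.superfluous₀ (v₀.comp u₀) hw₀
  let e₀ := LinearEquiv.ofBijective (v₀.comp u₀) bij₀
  let v₀' : Q₀ →ₗ[R] P₀ := (e₀.symm : P₀ →ₗ[R] P₀).comp v₀
  have hv₀' : g.comp v₀' = F₀ := by
    apply LinearMap.ext; intro y
    show g (e₀.symm (v₀ y)) = F₀ y
    have h1 : g ((v₀.comp u₀) (e₀.symm (v₀ y))) = g (e₀.symm (v₀ y)) :=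
      LinearMap.congr_fun hw₀ _
    have h2 : (v₀.comp u₀) (e₀.symm (v₀ y)) = v₀ y := e₀.apply_symm_apply (v₀ y)
    rw [← h1, h2]
    exact LinearMap.congr_fun hv₀ y
  have hv₀'u₀ : v₀'.comp u₀ = LinearMap.id := by
    apply LinearMap.ext; intro x
    show e₀.symm (v₀ (u₀ x)) = x
    exact e₀.symm_apply_apply x
  have hrange1 : LinearMap.range (u₀.comp f) ≤ LinearMap.range F₁ := by
    rw [hFG.exact]
    rintro _ ⟨p, rfl⟩
    rw [LinearMap.mem_ker]
    show F₀ (u₀ (f p)) = 0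
    have h3 : F₀ (u₀ (f p)) = g (f p) := LinearMap.congr_fun hu₀ (f p)
    rw [h3]
    exact LinearMap.mem_ker.1 (hfg.exact ▸ LinearMap.mem_range_self f p)
  obtain ⟨u₁, hu₁⟩ := exists_lift_of_range_le F₁ (u₀.comp f) hrange1
  have hrange2 : LinearMap.range (v₀'.comp F₁) ≤ LinearMap.range f := by
    rw [hfg.exact]
    rintro _ ⟨q, rfl⟩
    rw [LinearMap.mem_ker]
    show g (v₀' (F₁ q)) = 0
    have h3 : g (v₀' (F₁ q)) = F₀ (F₁ q) := LinearMap.congr_fun hv₀' (F₁ q)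
    rw [h3]
    exact LinearMap.mem_ker.1 (hFG.exact ▸ LinearMap.mem_range_self F₁ q)
  obtain ⟨v₁, hv₁⟩ := exists_lift_of_range_le f (v₀'.comp F₁) hrange2
  have hw₁ : f.comp (v₁.comp u₁) = f := by
    rw [← LinearMap.comp_assoc, hv₁, LinearMap.comp_assoc, hu₁, ← LinearMap.comp_assoc,
      hv₀'u₀, LinearMap.id_comp]
  have bij₁ := bijective_of_comp_eq f hfg.superfluous₁ (v₁.comp u₁) hw₁
  let e₁ := LinearEquiv.ofBijective (v₁.comp u₁) bij₁
  obtain ⟨δ, hδ⟩ := hs ((γ.comp (e₁.symm : P₁ →ₗ[R] P₁)).comp v₁)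
  refine ⟨δ.comp u₀, ?_⟩
  apply LinearMap.ext; intro p
  show δ (u₀ (f p)) = γ p
  have h4 : F₁ (u₁ p) = u₀ (f p) := LinearMap.congr_fun hu₁ p
  have h5 : δ (F₁ (u₁ p)) = γ (e₁.symm (v₁ (u₁ p))) := LinearMap.congr_fun hδ (u₁ p)
  have h6 : e₁.symm (v₁ (u₁ p)) = p := e₁.symm_apply_apply p
  rw [← h4, h5, h6]

end AuxGeneral

section TauCrit
variable (K : Type) [Field K] {R : Type} [Ring R] [Algebra K R]

lemma tau_hom_eq_zero {P₁ P₀ N : Type} [AddCommGroup P₁] [AddCommGroup P₀] [AddCommGroup N]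
    [Module R P₁] [Module R P₀] [Module R N]
    [Module.Projective R P₁] [Module.Finite R P₁]
    [Module.Projective R P₀] [Module.Finite R P₀]
    (f : P₁ →ₗ[R] P₀)
    (hsurj : ∀ γ : P₁ →ₗ[R] N, ∃ β : P₀ →ₗ[R] N, β.comp f = γ)
    (h : N →ₗ[R] TauOf K R f) : h = 0 := by
  obtain ⟨n, ξb, pb, hP₁⟩ := exists_dual_basis (R := R) P₁
  obtain ⟨m, ηb, qb, hP₀⟩ := exists_dual_basis (R := R) P₀
  have hB1 : ∀ (a : R) (x : N) (ζ : P₁ →ₗ[R] R),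
      h (a • x) (Submodule.Quotient.mk ζ) = h x (Submodule.Quotient.mk (op a • ζ)) := by
    intro a x ζ
    rw [h.map_smul, Submodule.Quotient.mk_smul]
    rfl
  have hmk0 : ∀ (ζ₀ : P₀ →ₗ[R] R) (x : N),
      h x (Submodule.Quotient.mk (ζ₀.comp f)) = 0 := by
    intro ζ₀ x
    have hz : (Submodule.Quotient.mk (ζ₀.comp f) : TransposeOf f) = 0 :=
      (Submodule.Quotient.mk_eq_zero _).2 ⟨ζ₀, rfl⟩
    rw [hz, map_zero]
  have key : ∀ (x : N) (ζ : P₁ →ₗ[R] R), h x (Submodule.Quotient.mk ζ) = 0 := by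
    intro x ζ
    let g : P₁ →ₗ[R] N :=
      { toFun := fun p => ζ p • x
        map_add' := fun p q => by
          show ζ (p + q) • x = ζ p • x + ζ q • x
          rw [map_add, add_smul]
        map_smul' := fun a p => by
          show ζ (a • p) • x = a • (ζ p • x)
          rw [map_smul, smul_eq_mul, mul_smul] }
    obtain ⟨g₀, hg₀⟩ := hsurj g
    have hζ : ζ = ∑ i, op (ζ (pb i)) • ξb i := by
      apply LinearMap.ext; intro p
      rw [LinearMap.sum_apply]
      conv_lhs => rw [← hP₁ p, map_sum]
      refine Finset.sum_congr rfl fun i _ => ?_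
      rw [map_smul, smul_eq_mul, LinearMap.smul_apply, MulOpposite.smul_eq_mul_unop,
        MulOpposite.unop_op]
    have step1 : h x (Submodule.Quotient.mk ζ)
        = ∑ i, h (ζ (pb i) • x) (Submodule.Quotient.mk (ξb i)) := by
      conv_lhs => rw [hζ]
      rw [← Submodule.mkQ_apply, map_sum, map_sum]
      exact Finset.sum_congr rfl fun i _ => by
        rw [Submodule.mkQ_apply]; exact (hB1 _ _ _).symm
    have hgp : ∀ p : P₁, ζ p • x = ∑ j, ηb j (f p) • g₀ (qb j) := by
      intro p
      have h1 : g₀ (f p) = ζ p • x := LinearMap.congr_fun hg₀ p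
      calc ζ p • x = g₀ (f p) := h1.symm
        _ = g₀ (∑ j, ηb j (f p) • qb j) := by rw [hP₀ (f p)]
        _ = ∑ j, ηb j (f p) • g₀ (qb j) := by
            rw [map_sum]
            exact Finset.sum_congr rfl fun j _ => map_smul g₀ _ _
    have step2 : ∀ i, h (ζ (pb i) • x) (Submodule.Quotient.mk (ξb i))
        = ∑ j, h (g₀ (qb j)) (Submodule.Quotient.mk (op (ηb j (f (pb i))) • ξb i)) := by
      intro i
      rw [hgp (pb i), map_sum h, LinearMap.sum_apply]
      exact Finset.sum_congr rfl fun j _ => hB1 _ _ _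
    have hrow : ∀ j, (∑ i, op (ηb j (f (pb i))) • ξb i) = (ηb j).comp f := by
      intro j
      apply LinearMap.ext; intro p
      rw [LinearMap.sum_apply]
      have hterm : ∀ i, (op (ηb j (f (pb i))) • ξb i) p = ξb i p * ηb j (f (pb i)) := by
        intro i
        rw [LinearMap.smul_apply, MulOpposite.smul_eq_mul_unop, MulOpposite.unop_op]
      rw [Finset.sum_congr rfl fun i _ => hterm i]
      show ∑ i, ξb i p * ηb j (f (pb i)) = ηb j (f p)
      conv_rhs => rw [← hP₁ p, map_sum, map_sum]
      refine (Finset.sum_congr rfl fun i _ => ?_).symm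
      rw [map_smul, map_smul, smul_eq_mul]
    have hcol : ∀ j, ∑ i, h (g₀ (qb j))
        (Submodule.Quotient.mk (op (ηb j (f (pb i))) • ξb i)) = 0 := by
      intro j
      rw [← map_sum]
      have : (∑ i, (Submodule.Quotient.mk (op (ηb j (f (pb i))) • ξb i) : TransposeOf f))
          = Submodule.Quotient.mk ((ηb j).comp f) := by
        rw [← hrow j, ← Submodule.mkQ_apply, map_sum]
        exact Finset.sum_congr rfl fun i _ => by rw [Submodule.mkQ_apply]
      rw [this, hmk0]
    rw [step1, Finset.sum_congr rfl fun i _ => step2 i, Finset.sum_comm]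
    rw [Finset.sum_congr rfl fun j _ => hcol j, Finset.sum_const_zero]
  apply LinearMap.ext; intro x
  apply LinearMap.ext; intro z
  obtain ⟨ζ, rfl⟩ := Submodule.Quotient.mk_surjective _ z
  simpa using key x ζ

end TauCrit

section EAux
variable {Λ : Type} [Ring Λ] {E : Type} [AddCommGroup E] [Module Λ E]

lemma sum_apply_single {X : Type} [AddCommGroup X] [Module Λ X] {n : ℕ}
    (pX : (Fin n → E) →ₗ[Λ] X) (y : Fin n → E) :
    ∑ j, pX (Pi.single j (y j)) = pX y :=
  (_root_.map_sum pX _ _).symm.trans (congrArg pX (Finset.univ_sum_single y))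

lemma isInAdd_self : IsInAdd Λ E E := by
  refine ⟨1, LinearMap.pi (fun _ => LinearMap.id), LinearMap.proj 0, ?_⟩
  apply LinearMap.ext; intro x
  rfl

lemma homEMap_comp {X Y Z : Type} [AddCommGroup X] [AddCommGroup Y] [AddCommGroup Z]
    [Module Λ X] [Module Λ Y] [Module Λ Z] (u : Y →ₗ[Λ] Z) (v : X →ₗ[Λ] Y) :
    homEMap Λ E (u.comp v) = (homEMap Λ E u).comp (homEMap Λ E v) := by
  apply LinearMap.ext; intro φ
  rfl

lemma homE_smul_comp {X Y : Type} [AddCommGroup X] [AddCommGroup Y] [Module Λ X] [Module Λ Y]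
    (H : HomE Λ E X →ₗ[EndOpRing Λ E] HomE Λ E Y)
    (ψ : HomE Λ E X) (θ : E →ₗ[Λ] E) : H (ψ.comp θ) = (H ψ).comp θ :=
  H.map_smul (op θ) ψ

lemma homE_full {X Y : Type} [AddCommGroup X] [AddCommGroup Y] [Module Λ X] [Module Λ Y]
    (hX : IsInAdd Λ E X) (H : HomE Λ E X →ₗ[EndOpRing Λ E] HomE Λ E Y) :
    ∃ h₀ : X →ₗ[Λ] Y, homEMap Λ E h₀ = H := by
  obtain ⟨nn, iX, pX⟩ := hX
  obtain ⟨n, iX, pX, hpi⟩ : ∃ (n : ℕ) (i : X →ₗ[Λ] (Fin n → E)) (p : (Fin n → E) →ₗ[Λ] X),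
      p.comp i = LinearMap.id := ⟨nn, iX, pX⟩
  refine ⟨∑ j, (H (pX.comp (LinearMap.single Λ (fun _ => E) j))).comp
      ((LinearMap.proj j).comp iX), LinearMap.ext fun φ => ?_⟩
  show (∑ j, (H (pX.comp (LinearMap.single Λ (fun _ => E) j))).comp
      ((LinearMap.proj j).comp iX)).comp φ = H φ
  rw [sum_comp']
  have hterm : ∀ j : Fin n,
      ((H (pX.comp (LinearMap.single Λ (fun _ => E) j))).comp
        ((LinearMap.proj j).comp iX)).comp φ
      = H ((pX.comp (LinearMap.single Λ (fun _ => E) j)).comp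
        (((LinearMap.proj j).comp iX).comp φ)) := by
    intro j
    rw [LinearMap.comp_assoc, homE_smul_comp]
  rw [Finset.sum_congr rfl fun j _ => hterm j, ← map_sum]
  congr 1
  apply LinearMap.ext; intro e
  rw [LinearMap.sum_apply]
  simp only [LinearMap.comp_apply, LinearMap.proj_apply, LinearMap.single_apply]
  rw [sum_apply_single pX]
  exact LinearMap.congr_fun hpi (φ e)

lemma homE_faithful {X Y : Type} [AddCommGroup X] [AddCommGroup Y] [Module Λ X] [Module Λ Y]
    (hX : IsInAdd Λ E X) (h₀ h₁ : X →ₗ[Λ] Y)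
    (heq : homEMap Λ E h₀ = homEMap Λ E h₁) : h₀ = h₁ := by
  obtain ⟨n, iX, pX, hpi⟩ : ∃ (n : ℕ) (i : X →ₗ[Λ] (Fin n → E)) (p : (Fin n → E) →ₗ[Λ] X),
      p.comp i = LinearMap.id := by obtain ⟨n, i, p, hp⟩ := hX; exact ⟨n, i, p, hp⟩
  apply LinearMap.ext; intro x
  have hx : x = ∑ j, pX (LinearMap.single Λ (fun _ => E) j (iX x j)) := by
    simp only [LinearMap.single_apply]
    rw [sum_apply_single pX]
    exact (LinearMap.congr_fun hpi x).symm
  have hkey : ∀ (j : Fin n) (v : E),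
      h₀ (pX (LinearMap.single Λ (fun _ => E) j v))
      = h₁ (pX (LinearMap.single Λ (fun _ => E) j v)) := by
    intro j v
    exact LinearMap.congr_fun
      (LinearMap.congr_fun heq (pX.comp (LinearMap.single Λ (fun _ => E) j))) v
  calc h₀ x = h₀ (∑ j, pX (LinearMap.single Λ (fun _ => E) j (iX x j))) := by rw [← hx]
    _ = ∑ j, h₀ (pX (LinearMap.single Λ (fun _ => E) j (iX x j))) := map_sum h₀ _ _
    _ = ∑ j, h₁ (pX (LinearMap.single Λ (fun _ => E) j (iX x j))) :=
        Finset.sum_congr rfl fun j _ => hkey j _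
    _ = h₁ (∑ j, pX (LinearMap.single Λ (fun _ => E) j (iX x j))) := (map_sum h₁ _ _).symm
    _ = h₁ x := by rw [← hx]

lemma homE_projective_finite {X : Type} [AddCommGroup X] [Module Λ X] (hX : IsInAdd Λ E X) :
    Module.Projective (EndOpRing Λ E) (HomE Λ E X) ∧
      Module.Finite (EndOpRing Λ E) (HomE Λ E X) := by
  obtain ⟨n, iX, pX, hpi⟩ : ∃ (n : ℕ) (i : X →ₗ[Λ] (Fin n → E)) (p : (Fin n → E) →ₗ[Λ] X),
      p.comp i = LinearMap.id := by obtain ⟨n, i, p, hp⟩ := hX; exact ⟨n, i, p, hp⟩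
  let π : (Fin n → EndOpRing Λ E) →ₗ[EndOpRing Λ E] HomE Λ E X :=
    { toFun := fun a => ∑ j, (pX.comp (LinearMap.single Λ (fun _ => E) j)).comp (unop (a j))
      map_add' := by
        intro a b
        show ∑ j, (pX.comp (LinearMap.single Λ (fun _ => E) j)).comp (unop (a j + b j))
            = (∑ j, (pX.comp (LinearMap.single Λ (fun _ => E) j)).comp (unop (a j)))
            + (∑ j, (pX.comp (LinearMap.single Λ (fun _ => E) j)).comp (unop (b j)))
        rw [← Finset.sum_add_distrib]
        exact Finset.sum_congr rfl fun j _ => by rw [unop_add, LinearMap.comp_add]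
      map_smul' := by
        intro c a
        show ∑ j, (pX.comp (LinearMap.single Λ (fun _ => E) j)).comp (unop ((c • a) j))
            = (∑ j, (pX.comp (LinearMap.single Λ (fun _ => E) j)).comp (unop (a j))).comp
              (unop c)
        rw [sum_comp']
        refine Finset.sum_congr rfl fun j _ => ?_
        show (pX.comp (LinearMap.single Λ (fun _ => E) j)).comp (unop (c * a j)) = _
        rw [unop_mul, Module.End.mul_eq_comp, ← LinearMap.comp_assoc] }
  let σ : HomE Λ E X →ₗ[EndOpRing Λ E] (Fin n → EndOpRing Λ E) :=
    { toFun := fun ψ => fun j => op (((LinearMap.proj j).comp iX).comp ψ)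
      map_add' := fun ψ ψ' => by
        funext j
        show op (((LinearMap.proj j).comp iX).comp (ψ + ψ'))
            = op (((LinearMap.proj j).comp iX).comp ψ) + op (((LinearMap.proj j).comp iX).comp ψ')
        rw [LinearMap.comp_add, op_add]
      map_smul' := fun c ψ => by
        funext j
        show op (((LinearMap.proj j).comp iX).comp (ψ.comp (unop c)))
          = c * op (((LinearMap.proj j).comp iX).comp ψ)
        rw [← LinearMap.comp_assoc, ← Module.End.mul_eq_comp, op_mul, op_unop] }
  have hπσ : π.comp σ = LinearMap.id := by
    apply LinearMap.ext; intro ψ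
    show ∑ j, (pX.comp (LinearMap.single Λ (fun _ => E) j)).comp
      (((LinearMap.proj j).comp iX).comp ψ) = ψ
    apply LinearMap.ext; intro e
    rw [LinearMap.sum_apply]
    simp only [LinearMap.comp_apply, LinearMap.proj_apply, LinearMap.single_apply]
    rw [sum_apply_single pX]
    exact LinearMap.congr_fun hpi (ψ e)
  constructor
  · exact Module.Projective.of_split σ π hπσ
  · exact Module.Finite.of_surjective π fun ψ => ⟨σ ψ, LinearMap.congr_fun hπσ ψ⟩

lemma homE_superfluous {Y Z : Type} [AddCommGroup Y] [AddCommGroup Z] [Module Λ Y] [Module Λ Z]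
    (hY : IsInAdd Λ E Y) (f : Y →ₗ[Λ] Z)
    (hmin : ∀ h : Y →ₗ[Λ] Y, f.comp h = f → Bijective h) :
    IsSuperfluous (EndOpRing Λ E) (LinearMap.ker (homEMap Λ E f)) := by
  haveI : Module.Projective (EndOpRing Λ E) (HomE Λ E Y) := (homE_projective_finite hY).1
  intro N' hsup
  set G := homEMap Λ E f with hG
  let F : N' →ₗ[EndOpRing Λ E] LinearMap.range G :=
    LinearMap.codRestrict (LinearMap.range G) (G.comp N'.subtype)
      (fun c => ⟨N'.subtype c, rfl⟩)
  have hFs : Surjective F := by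
    rintro ⟨z, x, rfl⟩
    have hx : x ∈ LinearMap.ker G ⊔ N' := hsup ▸ Submodule.mem_top
    obtain ⟨k, hk, nn, hn, hkn⟩ := Submodule.mem_sup.1 hx
    refine ⟨⟨nn, hn⟩, ?_⟩
    apply Subtype.ext
    show G nn = G x
    rw [← hkn, map_add, LinearMap.mem_ker.1 hk, zero_add]
  obtain ⟨Hl, hHl⟩ := Module.projective_lifting_property F G.rangeRestrict hFs
  set hmap : HomE Λ E Y →ₗ[EndOpRing Λ E] HomE Λ E Y := N'.subtype.comp Hl with hhm
  have hGh : G.comp hmap = G := by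
    apply LinearMap.ext; intro φ
    exact congrArg Subtype.val (LinearMap.congr_fun hHl φ)
  obtain ⟨h₀, hh₀⟩ := homE_full hY hmap
  have hfh : f.comp h₀ = f := by
    apply homE_faithful (E := E) hY
    rw [homEMap_comp, hh₀, ← hG, hGh]
  have bij := hmin h₀ hfh
  have hsurjh : Surjective hmap := by
    intro ψ
    refine ⟨((LinearEquiv.ofBijective h₀ bij).symm : Y →ₗ[Λ] Y).comp ψ, ?_⟩
    rw [← hh₀]
    show h₀.comp (((LinearEquiv.ofBijective h₀ bij).symm : Y →ₗ[Λ] Y).comp ψ) = ψ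
    apply LinearMap.ext; intro e
    exact (LinearEquiv.ofBijective h₀ bij).apply_symm_apply (ψ e)
  refine eq_top_iff.2 fun ψ _ => ?_
  obtain ⟨φ, rfl⟩ := hsurjh ψ
  exact (Hl φ).2

end EAux


variable (K : Type) [Field K] [IsAlgClosed K]
variable (Λ : Type) [Ring Λ] [Algebra K Λ] [FiniteDimensional K Λ]
variable (E : Type) [AddCommGroup E] [Module Λ E] [Module.Finite Λ E]
  [Module K E] [SMulCommClass Λ K E] [IsScalarTower K Λ E]

theorem stmt19 (hgen : IsGenerator Λ E)
    (M E₁ E₀ : Type) [AddCommGroup M] [Module Λ M] [Module.Finite Λ M]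
    [AddCommGroup E₁] [Module Λ E₁] [AddCommGroup E₀] [Module Λ E₀]
    (f₁ : E₁ →ₗ[Λ] E₀) (f₀ : E₀ →ₗ[Λ] M)
    (hpres : IsMinimalAddEPresentation Λ E f₁ f₀)
    (hEGP : IsEGorensteinProjective Λ E M) (hrig : IsERigid Λ E M) :
    IsMinimalProjPresentation (homEMap Λ E f₁) (homEMap Λ E f₀) ∧
      IsTauRigid K (EndOpRing Λ E) (HomE Λ E M) := by
  have hEadd : IsInAdd Λ E E := isInAdd_self
  have hpf₁ := homE_projective_finite (E := E) hpres.mem₁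
  have hpf₀ := homE_projective_finite (E := E) hpres.mem₀
  have hsurj : Surjective (homEMap Λ E f₀) := by
    intro ψ
    obtain ⟨h, hh⟩ := hpres.approx₀ (ModuleCat.of Λ E) hEadd ψ
    exact ⟨h, hh⟩
  have hexactΓ : LinearMap.range (homEMap Λ E f₁) = LinearMap.ker (homEMap Λ E f₀) := by
    apply le_antisymm
    · rintro _ ⟨φ, rfl⟩
      rw [LinearMap.mem_ker]
      show f₀.comp (f₁.comp φ) = 0
      apply LinearMap.ext; intro e
      have hmem : f₁ (φ e) ∈ LinearMap.ker f₀ := hpres.exact ▸ LinearMap.mem_range_self f₁ (φ e)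
      simpa using hmem
    · intro ψ hψ
      have hψ0 : f₀.comp ψ = 0 := LinearMap.mem_ker.1 hψ
      have hle : LinearMap.range ψ ≤ LinearMap.range f₁ := by
        rw [hpres.exact]
        rintro _ ⟨e, rfl⟩
        rw [LinearMap.mem_ker]
        exact LinearMap.congr_fun hψ0 e
      obtain ⟨h, hh⟩ := hpres.approx₁ (ModuleCat.of Λ E) hEadd ψ hle
      exact ⟨h, hh⟩
  have hmpp : IsMinimalProjPresentation (homEMap Λ E f₁) (homEMap Λ E f₀) :=
    { projective₁ := hpf₁.1
      projective₀ := hpf₀.1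
      finite₁ := hpf₁.2
      finite₀ := hpf₀.2
      surjective := hsurj
      exact := hexactΓ
      superfluous₀ := homE_superfluous hpres.mem₀ f₀ hpres.minimal₀
      superfluous₁ := homE_superfluous hpres.mem₁ f₁ hpres.minimal₁ }
  refine ⟨hmpp, ?_⟩
  intro Q₁ Q₀ f g hminp h
  haveI := hminp.projective₁; haveI := hminp.projective₀
  haveI := hminp.finite₁; haveI := hminp.finite₀
  have hsQ : ∀ γ : HomE Λ E E₁ →ₗ[EndOpRing Λ E] HomE Λ E M,
      ∃ δ : HomE Λ E E₀ →ₗ[EndOpRing Λ E] HomE Λ E M, δ.comp (homEMap Λ E f₁) = γ := by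
    intro γ
    obtain ⟨g', hg'⟩ := homE_full hpres.mem₁ γ
    obtain ⟨h', hh'⟩ := hrig (ModuleCat.of Λ E₁) (ModuleCat.of Λ E₀) f₁ f₀ hpres g'
    refine ⟨homEMap Λ E h', ?_⟩
    rw [← homEMap_comp, hh', hg']
  exact tau_hom_eq_zero K f
    (hom_surj_transfer f g hminp (homEMap Λ E f₁) (homEMap Λ E f₀) hmpp hsQ) h
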